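/- arXiv:math-ph/0405062 — 3 statements merged into one kernel-verified Lean document; each statement's English description precedes it below -/
import Mathlib

section
/- In the fermionic Fock space over K, if T is a positive trace class operator with eigenvalues tₖ and orthonormal eigenbasis (bₖ), and a family of vectors Ψ (indexed by elements A of the unit ball of an algebra) satisfies |⟨b_{k₁} ∧ ... ∧ b_{kₙ}, Ψ_A⟩| ≤ 2ⁿ ∏ⱼ ||T b_{kⱼ}|| for all strictly increasing multi-indices, then each Ψ_A admits an expansion over the antisymmetric basis whose total coefficient sum is bounded by det(1 + 2T) ≤ exp(2||T||₁); hence the set {Ψ_A} is a nuclear subset of Fock space with nuclearity index at most det(1 + 2T). -/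
/-!
Expanding `Ψ A` in the orthonormal basis `b S` writes `Ψ` as the sum of the rank-one maps
`A ↦ ⟪b S, Ψ A⟫ • b S`, whose norms are bounded by `∏ k ∈ S, 2 t k`.  Summing over all finite
`S ⊆ ℕ` gives `∑ S ∏ k ∈ S, 2 t k = ∏ k (1 + 2 t k)`, and `1 + x ≤ exp x` bounds the product.
-/

open scoped InnerProductSpace

theorem Real.tprod_one_add_le_exp_tsum {ι : Type*} {f : ι → ℝ} (hf : ∀ i, 0 ≤ f i)
    (hfs : Summable f) : ∏' i, (1 + f i) ≤ Real.exp (∑' i, f i) :=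
  le_of_tendsto' (Real.multipliable_one_add_of_summable hfs).hasProd fun s =>
    (Real.prod_one_add_le_exp_sum s hf).trans
      (Real.exp_le_exp.mpr (hfs.sum_le_tsum s fun i _ => hf i))

theorem exists_nuclear_expansion_of_norm_inner_le {𝕜 ι E F : Type*} [RCLike 𝕜]
    [NormedAddCommGroup E] [InnerProductSpace 𝕜 E] [NormedAddCommGroup F] [NormedSpace 𝕜 F]
    {b : ι → E} (hb : ∀ i, ‖b i‖ ≤ 1) (Ψ : F →L[𝕜] E)
    (hΨ : ∀ A, Ψ A = ∑' i, ⟪b i, Ψ A⟫_𝕜 • b i)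
    {c : ι → ℝ} (hc : ∀ i, 0 ≤ c i) (hcs : Summable c)
    (hbound : ∀ A i, ‖⟪b i, Ψ A⟫_𝕜‖ ≤ c i * ‖A‖) :
    ∃ (ρ : ι → (F →L[𝕜] 𝕜)) (v : ι → E),
      (∀ A, Ψ A = ∑' i, ρ i A • v i) ∧
      Summable (fun i => ‖ρ i‖ * ‖v i‖) ∧
      ∑' i, ‖ρ i‖ * ‖v i‖ ≤ ∑' i, c i := by
  have hρ : ∀ i, ‖(innerSL 𝕜 (b i)).comp Ψ‖ * ‖b i‖ ≤ c i := fun i =>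
    calc ‖(innerSL 𝕜 (b i)).comp Ψ‖ * ‖b i‖ ≤ ‖(innerSL 𝕜 (b i)).comp Ψ‖ :=
          mul_le_of_le_one_right (norm_nonneg _) (hb i)
      _ ≤ c i := ContinuousLinearMap.opNorm_le_bound _ (hc i) fun A => by simpa using hbound A i
  have hsummable : Summable fun i => ‖(innerSL 𝕜 (b i)).comp Ψ‖ * ‖b i‖ :=
    hcs.of_nonneg_of_le (fun i => by positivity) hρ
  exact ⟨fun i => (innerSL 𝕜 (b i)).comp Ψ, b, fun A => by simpa using hΨ A, hsummable,
    hsummable.tsum_le_tsum hρ hcs⟩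

/-- `b S` with `S = {k₁ < ⋯ < kₙ}` stands for `a*(b_{k₁})⋯a*(b_{kₙ})Ω` and `t k` for `‖T bₖ‖`,
so that `∏' k, (1 + 2 * t k) = det(1 + 2T)`. -/
theorem fermionic_fock_nuclearity_general
    {H 𝒜 : Type*} [NormedAddCommGroup H] [InnerProductSpace ℂ H]
    [NormedAddCommGroup 𝒜] [NormedSpace ℂ 𝒜]
    (b : Finset ℕ → H) (hb : Orthonormal ℂ b)
    (t : ℕ → ℝ) (ht : ∀ k, 0 ≤ t k) (hsum : Summable t)
    (Ψ : 𝒜 →L[ℂ] H)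
    (hspan : ∀ A, Ψ A = ∑' S : Finset ℕ, ⟪b S, Ψ A⟫_ℂ • b S)
    (hbound : ∀ A, ∀ S : Finset ℕ,
      ‖⟪b S, Ψ A⟫_ℂ‖ ≤ 2 ^ S.card * ‖A‖ * ∏ k ∈ S, t k) :
    ∃ (ρ : Finset ℕ → (𝒜 →L[ℂ] ℂ)) (v : Finset ℕ → H),
      (∀ A, Ψ A = ∑' S : Finset ℕ, ρ S A • v S) ∧
      Summable (fun S : Finset ℕ => ‖ρ S‖ * ‖v S‖) ∧
      (∑' S : Finset ℕ, ‖ρ S‖ * ‖v S‖) ≤ ∏' k, (1 + 2 * t k) ∧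
      (∏' k, (1 + 2 * t k)) ≤ Real.exp (2 * ∑' k, t k) := by
  have h2t : ∀ k, 0 ≤ 2 * t k := fun k => mul_nonneg zero_le_two (ht k)
  have h2tsum : Summable fun k => 2 * t k := hsum.mul_left 2
  have hprod : Summable fun S : Finset ℕ => ∏ k ∈ S, 2 * t k :=
    summable_finsetProd_of_summable_nonneg h2t h2tsum
  have hcoeff : ∀ A S, ‖⟪b S, Ψ A⟫_ℂ‖ ≤ (∏ k ∈ S, 2 * t k) * ‖A‖ := fun A S => by
    rw [Finset.prod_mul_distrib, Finset.prod_const, mul_right_comm]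
    exact hbound A S
  obtain ⟨ρ, v, hexp, hsummable, hnuclear⟩ :=
    exists_nuclear_expansion_of_norm_inner_le (fun S => (hb.1 S).le) Ψ hspan
      (fun S => Finset.prod_nonneg fun k _ => h2t k) hprod hcoeff
  refine ⟨ρ, v, hexp, hsummable, (tprod_one_add hprod).symm ▸ hnuclear, ?_⟩
  rw [← tsum_mul_left]
  exact Real.tprod_one_add_le_exp_tsum h2t h2tsum

/-- Nuclearity estimate on fermionic Fock space.  The fermionic Fock space over
`K` is presented through its orthonormal basis `b S` (indexed by finite subsets
`S = {k₁ < ⋯ < kₙ} ⊂ ℕ`, `b S = a*(b_{k₁})⋯a*(b_{kₙ})Ω`), built from the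
eigenbasis of a positive trace class operator `T` with eigenvalues `t k`.  If a
linear family `Ψ_A` (indexed by elements `A` of a Banach space `𝒜`, e.g. a
subalgebra of bounded operators) lies in the closed span of the basis and
satisfies `|⟨b S, Ψ A⟩| ≤ 2^|S| ‖A‖ ∏_{k ∈ S} ‖T bₖ‖`, then `Ψ` is nuclear with
nuclear norm at most `det(1 + 2T) = ∏ₖ (1 + 2tₖ) ≤ exp (2‖T‖₁)`. -/
theorem fermionic_fock_nuclearity
    {H 𝒜 : Type*} [NormedAddCommGroup H] [InnerProductSpace ℂ H] [CompleteSpace H]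
    [NormedAddCommGroup 𝒜] [NormedSpace ℂ 𝒜]
    (b : Finset ℕ → H) (hb : Orthonormal ℂ b)
    (t : ℕ → ℝ) (ht : ∀ k, 0 ≤ t k) (hsum : Summable t)
    (Ψ : 𝒜 →L[ℂ] H)
    (hspan : ∀ A, Ψ A = ∑' S : Finset ℕ, ⟪b S, Ψ A⟫_ℂ • b S)
    (hbound : ∀ A, ∀ S : Finset ℕ,
      ‖⟪b S, Ψ A⟫_ℂ‖ ≤ 2 ^ S.card * ‖A‖ * ∏ k ∈ S, t k) :
    ∃ (ρ : Finset ℕ → (𝒜 →L[ℂ] ℂ)) (v : Finset ℕ → H),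
      (∀ A, Ψ A = ∑' S : Finset ℕ, ρ S A • v S) ∧
      Summable (fun S : Finset ℕ => ‖ρ S‖ * ‖v S‖) ∧
      (∑' S : Finset ℕ, ‖ρ S‖ * ‖v S‖) ≤ ∏' k, (1 + 2 * t k) ∧
      (∏' k, (1 + 2 * t k)) ≤ Real.exp (2 * ∑' k, t k) :=
  fermionic_fock_nuclearity_general b hb t ht hsum Ψ hspan hbound
end

section
/- Let L_φ, L_π be closed complex Γ-invariant subspaces of K with orthogonal projections E_φ, E_π, and L = (1+Γ)L_φ + (1-Γ)L_π. Then for any ψ ∈ K the vector ψ' := (½(1+Γ)(1-E_π) + ½(1-Γ)(1-E_φ))ψ lies in the symplectic complement L' of L. -/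
/-!
With `a = (1 - E_π)ψ ∈ L_πᗮ` and `b = (1 - E_φ)ψ ∈ L_φᗮ` we have `2ψ' = u + v`, where
`u = a + Γa` is fixed by `Γ` and `v = b - Γb` is negated by it; likewise `ξ = p + q` with
`p = f + Γf` fixed (`f ∈ L_φ`) and `q = g - Γg` negated (`g ∈ L_π`). As `Γ` is antiunitary,
`⟪u, p⟫` and `⟪v, q⟫` are real. Orthogonal complements of `Γ`-invariant subspaces are again
`Γ`-invariant, so `u ∈ L_πᗮ` is orthogonal to `q` and `v ∈ L_φᗮ` to `p`: the mixed terms vanish.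
-/

open scoped InnerProductSpace

section AdditiveInvolution

variable {G : Type*} [AddCommGroup G] {Γ : G → G}

theorem map_add_self_eq (hΓinv : ∀ x, Γ (Γ x) = x) (hΓadd : ∀ x y, Γ (x + y) = Γ x + Γ y)
    (x : G) : Γ (x + Γ x) = x + Γ x := by
  rw [hΓadd, hΓinv, add_comm]

theorem map_sub_self_eq (hΓinv : ∀ x, Γ (Γ x) = x) (hΓadd : ∀ x y, Γ (x + y) = Γ x + Γ y)
    (x : G) : Γ (x - Γ x) = -(x - Γ x) := by
  have hsub : Γ (x - Γ x) = Γ x - Γ (Γ x) := map_sub (AddMonoidHom.mk' Γ hΓadd) x (Γ x)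
  rw [hsub, hΓinv, neg_sub]

end AdditiveInvolution

section Antiunitary

variable {K : Type*} [NormedAddCommGroup K] [InnerProductSpace ℂ K] {Γ : K → K}

theorem inner_comm_of_map_eq_self (hΓinner : ∀ x y, ⟪Γ x, Γ y⟫_ℂ = ⟪y, x⟫_ℂ) {u v : K}
    (hu : Γ u = u) (hv : Γ v = v) : ⟪u, v⟫_ℂ = ⟪v, u⟫_ℂ := by
  rw [← hΓinner v u, hu, hv]

theorem inner_comm_of_map_eq_neg (hΓinner : ∀ x y, ⟪Γ x, Γ y⟫_ℂ = ⟪y, x⟫_ℂ) {u v : K}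
    (hu : Γ u = -u) (hv : Γ v = -v) : ⟪u, v⟫_ℂ = ⟪v, u⟫_ℂ := by
  rw [← hΓinner v u, hu, hv, inner_neg_neg]

theorem Submodule.map_mem_orthogonal (hΓinv : ∀ x, Γ (Γ x) = x)
    (hΓinner : ∀ x y, ⟪Γ x, Γ y⟫_ℂ = ⟪y, x⟫_ℂ) {U : Submodule ℂ K} (hU : ∀ x ∈ U, Γ x ∈ U)
    {x : K} (hx : x ∈ Uᗮ) : Γ x ∈ Uᗮ := by
  refine (Submodule.mem_orthogonal U (Γ x)).2 fun u hu => ?_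
  rw [← hΓinv u, hΓinner]
  exact Submodule.inner_left_of_mem_orthogonal (hU u hu) hx

end Antiunitary

section InnerComm

variable {K : Type*} [NormedAddCommGroup K] [InnerProductSpace ℂ K]

theorem inner_add_comm_of_inner_eq_zero {u v p q : K} (hup : ⟪u, p⟫_ℂ = ⟪p, u⟫_ℂ)
    (hvq : ⟪v, q⟫_ℂ = ⟪q, v⟫_ℂ) (huq : ⟪u, q⟫_ℂ = 0) (hvp : ⟪v, p⟫_ℂ = 0) :
    ⟪u + v, p + q⟫_ℂ = ⟪p + q, u + v⟫_ℂ := by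
  have hqu : ⟪q, u⟫_ℂ = 0 := inner_eq_zero_symm.1 huq
  have hpv : ⟪p, v⟫_ℂ = 0 := inner_eq_zero_symm.1 hvp
  simp only [inner_add_left, inner_add_right, hup, hvq, huq, hvp, hqu, hpv, add_zero, zero_add]

theorem inner_real_smul_comm (r : ℝ) {x y : K} (h : ⟪x, y⟫_ℂ = ⟪y, x⟫_ℂ) :
    ⟪r • x, y⟫_ℂ = ⟪y, r • x⟫_ℂ := by
  rw [RCLike.real_smul_eq_coe_smul (K := ℂ), inner_smul_real_left, inner_smul_real_right, h]

end InnerComm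

theorem psi_prime_mem_symplectic_complement_general
    {K : Type*} [NormedAddCommGroup K] [InnerProductSpace ℂ K]
    (Γ : K → K)
    (hΓinv : ∀ ψ, Γ (Γ ψ) = ψ)
    (hΓadd : ∀ ψ₁ ψ₂, Γ (ψ₁ + ψ₂) = Γ ψ₁ + Γ ψ₂)
    (hΓinner : ∀ ψ₁ ψ₂, ⟪Γ ψ₁, Γ ψ₂⟫_ℂ = ⟪ψ₂, ψ₁⟫_ℂ)
    (Lφ Lπ : Submodule ℂ K) [Submodule.HasOrthogonalProjection Lφ] [Submodule.HasOrthogonalProjection Lπ]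
    (hLφΓ : ∀ x ∈ Lφ, Γ x ∈ Lφ) (hLπΓ : ∀ x ∈ Lπ, Γ x ∈ Lπ)
    (L : Set K)
    (hL : L = {x | ∃ f ∈ Lφ, ∃ g ∈ Lπ, x = (f + Γ f) + (g - Γ g)})
    (ψ ψ' : K)
    (hψ' : ψ' = (2⁻¹ : ℝ) •
      (((ψ - (Submodule.orthogonalProjectionOnto Lπ ψ : K)) + Γ (ψ - (Submodule.orthogonalProjectionOnto Lπ ψ : K))) +
       ((ψ - (Submodule.orthogonalProjectionOnto Lφ ψ : K)) - Γ (ψ - (Submodule.orthogonalProjectionOnto Lφ ψ : K))))) :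
    ∀ ξ ∈ L, ⟪ψ', ξ⟫_ℂ = ⟪ξ, ψ'⟫_ℂ := by
  subst hL hψ'
  rintro _ ⟨f, hf, g, hg, rfl⟩
  have hu : (ψ - Lπ.starProjection ψ) + Γ (ψ - Lπ.starProjection ψ) ∈ Lπᗮ :=
    have ha := Lπ.sub_starProjection_mem_orthogonal ψ
    Lπᗮ.add_mem ha (Lπ.map_mem_orthogonal hΓinv hΓinner hLπΓ ha)
  have hv : (ψ - Lφ.starProjection ψ) - Γ (ψ - Lφ.starProjection ψ) ∈ Lφᗮ :=
    have hb := Lφ.sub_starProjection_mem_orthogonal ψ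
    Lφᗮ.sub_mem hb (Lφ.map_mem_orthogonal hΓinv hΓinner hLφΓ hb)
  refine inner_real_smul_comm _ (inner_add_comm_of_inner_eq_zero ?_ ?_ ?_ ?_)
  · exact inner_comm_of_map_eq_self hΓinner (map_add_self_eq hΓinv hΓadd _)
      (map_add_self_eq hΓinv hΓadd _)
  · exact inner_comm_of_map_eq_neg hΓinner (map_sub_self_eq hΓinv hΓadd _)
      (map_sub_self_eq hΓinv hΓadd _)
  · exact Submodule.inner_left_of_mem_orthogonal (Lπ.sub_mem hg (hLπΓ g hg)) hu
  · exact Submodule.inner_left_of_mem_orthogonal (Lφ.add_mem hf (hLφΓ f hf)) hv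

/-- For closed complex `Γ`-invariant subspaces `L_φ, L_π` of `K` with orthogonal
projections `E_φ, E_π`, and `L = (1+Γ)L_φ + (1-Γ)L_π`, the vector
`ψ' = (½(1+Γ)(1-E_π) + ½(1-Γ)(1-E_φ))ψ` lies in the symplectic complement `L'`
of `L` for any `ψ ∈ K`. -/
theorem psi_prime_mem_symplectic_complement
    {K : Type*} [NormedAddCommGroup K] [InnerProductSpace ℂ K] [CompleteSpace K]
    (Γ : K → K)
    (hΓinv : ∀ ψ, Γ (Γ ψ) = ψ)
    (hΓadd : ∀ ψ₁ ψ₂, Γ (ψ₁ + ψ₂) = Γ ψ₁ + Γ ψ₂)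
    (hΓsmul : ∀ (c : ℂ) ψ, Γ (c • ψ) = (starRingEnd ℂ c) • Γ ψ)
    (hΓinner : ∀ ψ₁ ψ₂, ⟪Γ ψ₁, Γ ψ₂⟫_ℂ = ⟪ψ₂, ψ₁⟫_ℂ)
    (Lφ Lπ : Submodule ℂ K) [Submodule.HasOrthogonalProjection Lφ] [Submodule.HasOrthogonalProjection Lπ]
    (hLφΓ : ∀ x ∈ Lφ, Γ x ∈ Lφ) (hLπΓ : ∀ x ∈ Lπ, Γ x ∈ Lπ)
    (L : Set K)
    (hL : L = {x | ∃ f ∈ Lφ, ∃ g ∈ Lπ, x = (f + Γ f) + (g - Γ g)})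
    (ψ ψ' : K)
    (hψ' : ψ' = (2⁻¹ : ℝ) •
      (((ψ - (Submodule.orthogonalProjectionOnto Lπ ψ : K)) + Γ (ψ - (Submodule.orthogonalProjectionOnto Lπ ψ : K))) +
       ((ψ - (Submodule.orthogonalProjectionOnto Lφ ψ : K)) - Γ (ψ - (Submodule.orthogonalProjectionOnto Lφ ψ : K))))) :
    ∀ ξ ∈ L, ⟪ψ', ξ⟫_ℂ = ⟪ξ, ψ'⟫_ℂ :=
  psi_prime_mem_symplectic_complement_general Γ hΓinv hΓadd hΓinner Lφ Lπ hLφΓ hLπΓ L hL ψ ψ' hψ'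
end

section
/- The odd derivations δ^±_ψ on the polynomial field algebra P(L) satisfy the norm bounds ||δ⁺_ψ(A^±)|| ≤ (||(1-Γ)E_φψ||² + ||(1+Γ)E_πψ||²)^{1/2}·||A^±|| and ||δ⁻_ψ(A^±)|| ≤ (||(1+Γ)E_φψ||² + ||(1-Γ)E_πψ||²)^{1/2}·||A^±|| for all even/odd elements A^± and all ψ ∈ K. -/
/-!
Write `Φ(ξ) = a*(ξ) + a(ξ)` for the Segal field operator. Unfolding the definitions,
`G⁻ = Φ(2Γψ)` and `G⁺ = -i Φ(2Γ(iψ))`, so the bound for `δ⁺` at `ψ` is the bound for `δ⁻` at `iψ`.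

By the CAR, `Φ(x)` anticommutes with `Φ(ξ)` whenever `Re⟪x, ξ⟫ = 0`; it then commutes with the even
and anticommutes with the odd monomials in `Φ(L)`. Hence the graded commutator of `Φ(w)` with an
element of `P(L)` only depends on the real inner products of `w` with `L`, and `w = 2Γψ` may be
replaced by `w' = (1+Γ)E_φψ + (Γ-1)E_πψ`. Finally `Φ(w')² = ‖w'‖²` gives `‖Φ(w')‖ ≤ ‖w'‖`, and the
`Γ`-real and `Γ`-imaginary summands of `w'` are orthogonal for `Re⟪·,·⟫`.
-/

open scoped InnerProductSpace
open ContinuousLinearMap (adjoint)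
open Submodule (span)

theorem exists_linearMap_coe_eq_of_map_smul_add {R M N : Type*} [Semiring R] [AddCommMonoid M]
    [Module R M] [AddCommGroup N] [Module R N] {f : M → N}
    (hf : ∀ (c : R) x y, f (c • x + y) = c • f x + f y) : ∃ g : M →ₗ[R] N, ⇑g = f := by
  have h0 : f 0 = 0 := by simpa using hf 1 0 0
  exact ⟨{ toFun := f
           map_add' := fun x y => by simpa using hf 1 x y
           map_smul' := fun c x => by simpa [h0] using hf c x 0 }, rfl⟩

section GradedCommutator

variable {R : Type*} [Ring R]

theorem mul_list_prod_eq_neg_one_pow_smul {D : R} {l : List R} (h : ∀ x ∈ l, D * x = -(x * D)) :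
    D * l.prod = (-1 : ℤ) ^ l.length • (l.prod * D) := by
  induction l with
  | nil => simp
  | cons x t ih =>
    simp only [List.forall_mem_cons] at h
    rw [List.prod_cons, ← mul_assoc, h.1, neg_mul, mul_assoc, ih h.2, List.length_cons, pow_succ,
      mul_smul_comm, mul_comm, mul_smul, ← mul_assoc]
    simp

def evenMonomials {ι : Type*} (f : ι → R) (s : Set ι) : Set R :=
  {M | ∃ l : List ι, (∀ i ∈ l, i ∈ s) ∧ Even l.length ∧ M = (l.map f).prod}

def oddMonomials {ι : Type*} (f : ι → R) (s : Set ι) : Set R :=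
  {M | ∃ l : List ι, (∀ i ∈ l, i ∈ s) ∧ ¬ Even l.length ∧ M = (l.map f).prod}

variable {𝕜 ι : Type*} [CommSemiring 𝕜] [Algebra 𝕜 R] {f : ι → R} {s : Set ι} {D A : R}

theorem commute_of_mem_span_evenMonomials (h : ∀ i ∈ s, D * f i = -(f i * D))
    (hA : A ∈ span 𝕜 (evenMonomials f s)) : Commute D A := by
  induction hA using Submodule.span_induction with
  | mem M hM =>
    obtain ⟨l, hl, heven, rfl⟩ := hM
    have := mul_list_prod_eq_neg_one_pow_smul (D := D) (l := l.map f)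
      (by simpa using fun i hi => h i (hl i hi))
    rwa [List.length_map, heven.neg_one_pow, one_smul] at this
  | zero => exact Commute.zero_right D
  | add _ _ _ _ h₁ h₂ => exact h₁.add_right h₂
  | smul c _ _ h => exact h.smul_right c

theorem mul_eq_neg_mul_of_mem_span_oddMonomials (h : ∀ i ∈ s, D * f i = -(f i * D))
    (hA : A ∈ span 𝕜 (oddMonomials f s)) : D * A = -(A * D) := by
  induction hA using Submodule.span_induction with
  | mem M hM =>
    obtain ⟨l, hl, hodd, rfl⟩ := hM
    have := mul_list_prod_eq_neg_one_pow_smul (D := D) (l := l.map f)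
      (by simpa using fun i hi => h i (hl i hi))
    rwa [List.length_map, (Nat.not_even_iff_odd.mp hodd).neg_one_pow, neg_one_smul] at this
  | zero => simp
  | add _ _ _ _ h₁ h₂ => rw [mul_add, h₁, h₂, add_mul, neg_add]
  | smul c _ _ h => rw [mul_smul_comm, h, smul_mul_assoc, smul_neg]

theorem commutator_eq_of_anticommute_sub {X Y : R}
    (h : ∀ i ∈ s, (X - Y) * f i = -(f i * (X - Y)))
    (hA : A ∈ span 𝕜 (evenMonomials f s)) : X * A - A * X = Y * A - A * Y := by
  have hcomm := (commute_of_mem_span_evenMonomials h hA).eq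
  rw [← sub_eq_zero] at hcomm ⊢
  rw [← hcomm]
  noncomm_ring

theorem anticommutator_eq_of_anticommute_sub {X Y : R}
    (h : ∀ i ∈ s, (X - Y) * f i = -(f i * (X - Y)))
    (hA : A ∈ span 𝕜 (oddMonomials f s)) : X * A + A * X = Y * A + A * Y := by
  have hanti := mul_eq_neg_mul_of_mem_span_oddMonomials h hA
  rw [← add_eq_zero_iff_eq_neg] at hanti
  rw [← sub_eq_zero, ← hanti]
  noncomm_ring

end GradedCommutator

section NormBound

variable {𝕜 R : Type*} [RCLike 𝕜] [NormedRing R] [NormedAlgebra 𝕜 R]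

theorem norm_half_smul_commutator_le (X A : R) :
    ‖(2⁻¹ : 𝕜) • (X * A - A * X)‖ ≤ ‖X‖ * ‖A‖ := by
  have := norm_sub_le (X * A) (A * X)
  have := norm_mul_le X A
  have := norm_mul_le A X
  rw [norm_smul, norm_inv, RCLike.norm_two]
  nlinarith

theorem norm_half_smul_anticommutator_le (X A : R) :
    ‖(2⁻¹ : 𝕜) • (X * A + A * X)‖ ≤ ‖X‖ * ‖A‖ := by
  have := norm_add_le (X * A) (A * X)
  have := norm_mul_le X A
  have := norm_mul_le A X
  rw [norm_smul, norm_inv, RCLike.norm_two]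
  nlinarith

theorem norm_half_smul_gradedCommutator_le_of_anticommute_sub {ι : Type*} {f : ι → R} {s : Set ι}
    {X Y : R} {C : ℝ}
    (h : ∀ i ∈ s, (X - Y) * f i = -(f i * (X - Y))) (hY : ‖Y‖ ≤ C) :
    (∀ A ∈ span 𝕜 (evenMonomials f s), ‖(2⁻¹ : 𝕜) • (X * A - A * X)‖ ≤ C * ‖A‖) ∧
    (∀ A ∈ span 𝕜 (oddMonomials f s), ‖(2⁻¹ : 𝕜) • (X * A + A * X)‖ ≤ C * ‖A‖) := by
  constructor
  · intro A hA
    rw [commutator_eq_of_anticommute_sub h hA]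
    exact (norm_half_smul_commutator_le Y A).trans (by gcongr)
  · intro A hA
    rw [anticommutator_eq_of_anticommute_sub h hA]
    exact (norm_half_smul_anticommutator_le Y A).trans (by gcongr)

end NormBound

section Conjugation

variable {K : Type*} [NormedAddCommGroup K] [InnerProductSpace ℂ K]

structure IsConjugation (Γ : K →ₗ⋆[ℂ] K) : Prop where
  involutive : Function.Involutive Γ
  inner_map_map : ∀ x y, ⟪Γ x, Γ y⟫_ℂ = ⟪y, x⟫_ℂ

theorem norm_I_smul_add_map (Γ : K →ₗ⋆[ℂ] K) (x : K) :
    ‖Complex.I • x + Γ (Complex.I • x)‖ = ‖x - Γ x‖ := by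
  rw [map_smulₛₗ, Complex.conj_I, neg_smul, ← sub_eq_add_neg, ← smul_sub, norm_smul, Complex.norm_I,
    one_mul]

theorem norm_I_smul_sub_map (Γ : K →ₗ⋆[ℂ] K) (x : K) :
    ‖Complex.I • x - Γ (Complex.I • x)‖ = ‖x + Γ x‖ := by
  rw [map_smulₛₗ, Complex.conj_I, neg_smul, sub_neg_eq_add, ← smul_add, norm_smul, Complex.norm_I,
    one_mul]

namespace IsConjugation

variable {Γ : K →ₗ⋆[ℂ] K}

theorem re_inner_map_left (hΓ : IsConjugation Γ) (x y : K) :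
    RCLike.re ⟪Γ x, y⟫_ℂ = RCLike.re ⟪x, Γ y⟫_ℂ := by
  conv_lhs => rw [← hΓ.involutive y, hΓ.inner_map_map]
  exact inner_re_symm _ _

theorem re_inner_eq_zero (hΓ : IsConjugation Γ) {x y : K} (hx : Γ x = x) (hy : Γ y = -y) :
    RCLike.re ⟪x, y⟫_ℂ = 0 := by
  have h := hΓ.re_inner_map_left x y
  rw [hx, hy, inner_neg_right, map_neg] at h
  linarith

theorem norm_add_sq_eq (hΓ : IsConjugation Γ) (q p : K) :
    ‖(q + Γ q) + (Γ p - p)‖ ^ 2 = ‖q + Γ q‖ ^ 2 + ‖p - Γ p‖ ^ 2 := by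
  have hre : RCLike.re ⟪q + Γ q, Γ p - p⟫_ℂ = 0 :=
    hΓ.re_inner_eq_zero (by rw [map_add, hΓ.involutive, add_comm])
      (by rw [map_sub, hΓ.involutive, neg_sub])
  rw [norm_add_sq (𝕜 := ℂ), hre, norm_sub_rev (Γ p)]
  ring

theorem re_inner_two_smul_map_sub_eq_zero {Lφ Lπ : Submodule ℂ K} (hΓ : IsConjugation Γ)
    (hLφ : ∀ x ∈ Lφ, Γ x ∈ Lφ) (hLπ : ∀ x ∈ Lπ, Γ x ∈ Lπ) {ψ q p f g : K}
    (hq : ψ - q ∈ Lφᗮ) (hp : ψ - p ∈ Lπᗮ) (hf : f ∈ Lφ) (hg : g ∈ Lπ) :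
    RCLike.re ⟪(2 : ℂ) • Γ ψ - ((q + Γ q) + (Γ p - p)), (f + Γ f) + (g - Γ g)⟫_ℂ = 0 := by
  set u := f + Γ f
  set v := g - Γ g
  have hΓu : Γ u = u := by rw [map_add, hΓ.involutive, add_comm]
  have hΓv : Γ v = -v := by rw [map_sub, hΓ.involutive, neg_sub]
  have hu : RCLike.re ⟪ψ - q, u⟫_ℂ = 0 := by
    rw [inner_re_symm, Submodule.inner_right_of_mem_orthogonal (Lφ.add_mem hf (hLφ f hf)) hq,
      map_zero]
  have hv : RCLike.re ⟪ψ - p, v⟫_ℂ = 0 := by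
    rw [inner_re_symm, Submodule.inner_right_of_mem_orthogonal (Lπ.sub_mem hg (hLπ g hg)) hp,
      map_zero]
  have hΓ_u : ∀ z, RCLike.re ⟪Γ z, u⟫_ℂ = RCLike.re ⟪z, u⟫_ℂ := fun z => by
    rw [hΓ.re_inner_map_left, hΓu]
  have hΓ_v : ∀ z, RCLike.re ⟪Γ z, v⟫_ℂ = -RCLike.re ⟪z, v⟫_ℂ := fun z => by
    rw [hΓ.re_inner_map_left, hΓv, inner_neg_right, map_neg]
  simp only [two_smul, inner_sub_left, inner_add_left, inner_add_right, map_add, map_sub,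
    hΓ_u, hΓ_v] at hu hv ⊢
  linarith

end IsConjugation

end Conjugation

section FieldOperators

variable {K H : Type*} [NormedAddCommGroup K] [InnerProductSpace ℂ K]
  [NormedAddCommGroup H] [InnerProductSpace ℂ H] [CompleteSpace H]

/-- `c` is the creation map `ξ ↦ a*(ξ)`; the annihilator `a(ξ)` is `adjoint (c ξ)`. -/
structure IsCAR (c : K →ₗ[ℂ] H →L[ℂ] H) : Prop where
  anticomm_adjoint : ∀ x y, adjoint (c x) * adjoint (c y) + adjoint (c y) * adjoint (c x) = 0
  adjoint_anticomm : ∀ x y, adjoint (c x) * c y + c y * adjoint (c x) = ⟪x, y⟫_ℂ • 1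

noncomputable def segalField (c : K →ₗ[ℂ] H →L[ℂ] H) (ξ : K) : H →L[ℂ] H := c ξ + adjoint (c ξ)

variable {c : K →ₗ[ℂ] H →L[ℂ] H} {Γ : K →ₗ⋆[ℂ] K}

theorem segalField_sub (x y : K) : segalField c (x - y) = segalField c x - segalField c y := by
  simp only [segalField, map_sub]
  abel

theorem isSelfAdjoint_segalField (x : K) : IsSelfAdjoint (segalField c x) := by
  rw [IsSelfAdjoint, ContinuousLinearMap.star_eq_adjoint, segalField, map_add,
    ContinuousLinearMap.adjoint_adjoint, add_comm]

namespace IsCAR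

theorem anticomm (hc : IsCAR c) (x y : K) : c x * c y + c y * c x = 0 := by
  have h := congrArg adjoint (hc.anticomm_adjoint y x)
  simpa only [map_add, map_zero, ← ContinuousLinearMap.star_eq_adjoint, star_mul, star_star] using h

theorem segalField_anticomm (hc : IsCAR c) (x y : K) :
    segalField c x * segalField c y + segalField c y * segalField c x =
      (⟪x, y⟫_ℂ + ⟪y, x⟫_ℂ) • 1 := by
  have e : segalField c x * segalField c y + segalField c y * segalField c x =
      (c x * c y + c y * c x) + (adjoint (c x) * adjoint (c y) + adjoint (c y) * adjoint (c x)) +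
      (adjoint (c x) * c y + c y * adjoint (c x)) +
      (adjoint (c y) * c x + c x * adjoint (c y)) := by
    simp only [segalField]
    noncomm_ring
  rw [e, hc.anticomm, hc.anticomm_adjoint, hc.adjoint_anticomm, hc.adjoint_anticomm, add_smul]
  simp

theorem segalField_mul_eq_neg_of_re_inner_eq_zero (hc : IsCAR c) {x y : K}
    (h : RCLike.re ⟪x, y⟫_ℂ = 0) :
    segalField c x * segalField c y = -(segalField c y * segalField c x) := by
  have h' : (⟪x, y⟫_ℂ).re = 0 := h
  rw [← add_eq_zero_iff_eq_neg, hc.segalField_anticomm, ← inner_conj_symm y x, Complex.add_conj]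
  simp [h']

theorem norm_segalField_le (hc : IsCAR c) (x : K) : ‖segalField c x‖ ≤ ‖x‖ := by
  have hsq : segalField c x * segalField c x = ⟪x, x⟫_ℂ • 1 := by
    have h := hc.segalField_anticomm x x
    rw [← two_smul ℂ, ← two_mul, mul_smul] at h
    exact smul_right_injective _ two_ne_zero h
  refine (pow_le_pow_iff_left₀ (norm_nonneg _) (norm_nonneg _) two_ne_zero).1 ?_
  rw [← (isSelfAdjoint_segalField x).norm_mul_self, hsq, norm_smul, inner_self_eq_norm_sq_to_K,
    norm_pow, RCLike.norm_ofReal, abs_norm]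
  exact mul_le_of_le_one_right (by positivity) ContinuousLinearMap.norm_id_le

end IsCAR

-- The paper's auxiliary fields `φ_aux` and `π_aux`.
noncomputable def auxField (c : K →ₗ[ℂ] H →L[ℂ] H) (Γ : K →ₗ⋆[ℂ] K) (η : K) : H →L[ℂ] H :=
  c η + adjoint (c (Γ η))

noncomputable def auxMomentum (c : K →ₗ[ℂ] H →L[ℂ] H) (Γ : K →ₗ⋆[ℂ] K) (η : K) : H →L[ℂ] H :=
  Complex.I • (c η - adjoint (c (Γ η)))

theorem auxField_add_I_smul_auxMomentum (hΓ : Function.Involutive Γ) (ψ : K) :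
    auxField c Γ (ψ + Γ ψ) + Complex.I • auxMomentum c Γ (ψ - Γ ψ) =
      segalField c ((2 : ℂ) • Γ ψ) := by
  simp only [auxField, auxMomentum, segalField, smul_smul, Complex.I_mul_I, map_add, map_sub,
    hΓ ψ, two_smul]
  module

theorem auxField_sub_add_I_smul_auxMomentum (hΓ : Function.Involutive Γ) (ψ : K) :
    auxField c Γ (ψ - Γ ψ) + Complex.I • auxMomentum c Γ (ψ + Γ ψ) =
      (-Complex.I) • segalField c ((2 : ℂ) • Γ (Complex.I • ψ)) := by
  simp only [auxField, auxMomentum, segalField, smul_smul, Complex.I_mul_I, map_add, map_sub,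
    map_smul, map_smulₛₗ, hΓ ψ, map_mul, map_neg, map_ofNat, Complex.conj_I]
  match_scalars <;> ring_nf <;> simp

theorem IsCAR.norm_half_smul_gradedCommutator_le (hc : IsCAR c) (hΓ : IsConjugation Γ)
    {Lφ Lπ : Submodule ℂ K} (hLφ : ∀ x ∈ Lφ, Γ x ∈ Lφ) (hLπ : ∀ x ∈ Lπ, Γ x ∈ Lπ) {ψ q p : K}
    (hq : ψ - q ∈ Lφᗮ) (hp : ψ - p ∈ Lπᗮ) {u : ℂ} (hu : ‖u‖ ≤ 1) :
    let L := {x | ∃ f ∈ Lφ, ∃ g ∈ Lπ, x = (f + Γ f) + (g - Γ g)}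
    let X := u • segalField c ((2 : ℂ) • Γ ψ)
    let C := √(‖q + Γ q‖ ^ 2 + ‖p - Γ p‖ ^ 2)
    (∀ A ∈ span ℂ (evenMonomials (segalField c) L), ‖(2⁻¹ : ℂ) • (X * A - A * X)‖ ≤ C * ‖A‖) ∧
    (∀ A ∈ span ℂ (oddMonomials (segalField c) L), ‖(2⁻¹ : ℂ) • (X * A + A * X)‖ ≤ C * ‖A‖) := by
  intro L X C
  apply norm_half_smul_gradedCommutator_le_of_anticommute_sub
    (Y := u • segalField c ((q + Γ q) + (Γ p - p)))
  · rintro _ ⟨f, hf, g, hg, rfl⟩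
    have hre := hΓ.re_inner_two_smul_map_sub_eq_zero hLφ hLπ hq hp hf hg
    rw [← smul_sub, ← segalField_sub, smul_mul_assoc, mul_smul_comm,
      hc.segalField_mul_eq_neg_of_re_inner_eq_zero hre, smul_neg]
  · calc ‖u • segalField c ((q + Γ q) + (Γ p - p))‖ ≤ 1 * ‖(q + Γ q) + (Γ p - p)‖ := by
          rw [norm_smul]; gcongr; exact hc.norm_segalField_le _
      _ = C := by rw [one_mul, ← Real.sqrt_sq (norm_nonneg _), hΓ.norm_add_sq_eq]

end FieldOperators

theorem derivations_norm_bounds_general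
    {K H : Type*} [NormedAddCommGroup K] [InnerProductSpace ℂ K]
    [NormedAddCommGroup H] [InnerProductSpace ℂ H] [CompleteSpace H]
    (a astar : K → H →L[ℂ] H)
    (hstar : ∀ ψ, astar ψ = ContinuousLinearMap.adjoint (a ψ))
    (hastar_lin : ∀ (c : ℂ) ψ₁ ψ₂, astar (c • ψ₁ + ψ₂) = c • astar ψ₁ + astar ψ₂)
    (hCAR1 : ∀ ψ₁ ψ₂, a ψ₁ * a ψ₂ + a ψ₂ * a ψ₁ = 0)
    (hCAR2 : ∀ ψ₁ ψ₂, a ψ₁ * astar ψ₂ + astar ψ₂ * a ψ₁ = ⟪ψ₁, ψ₂⟫_ℂ • 1)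
    (Γ : K → K)
    (hΓinv : ∀ ψ, Γ (Γ ψ) = ψ)
    (hΓadd : ∀ ψ₁ ψ₂, Γ (ψ₁ + ψ₂) = Γ ψ₁ + Γ ψ₂)
    (hΓsmul : ∀ (c : ℂ) ψ, Γ (c • ψ) = (starRingEnd ℂ c) • Γ ψ)
    (hΓinner : ∀ ψ₁ ψ₂, ⟪Γ ψ₁, Γ ψ₂⟫_ℂ = ⟪ψ₂, ψ₁⟫_ℂ)
    (φaux πaux fld : K → H →L[ℂ] H)
    (hφaux : ∀ η, φaux η = astar η + a (Γ η))
    (hπaux : ∀ η, πaux η = Complex.I • (astar η - a (Γ η)))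
    (hfld : ∀ ξ, fld ξ = astar ξ + a ξ)
    (Lφ Lπ : Submodule ℂ K) [Submodule.HasOrthogonalProjection Lφ] [Submodule.HasOrthogonalProjection Lπ]
    (hLφΓ : ∀ x ∈ Lφ, Γ x ∈ Lφ) (hLπΓ : ∀ x ∈ Lπ, Γ x ∈ Lπ)
    (L : Set K)
    (hL : L = {x | ∃ f ∈ Lφ, ∃ g ∈ Lπ, x = (f + Γ f) + (g - Γ g)})
    (ψ : K) (Gp Gm : H →L[ℂ] H)
    (hGp : Gp = φaux (ψ - Γ ψ) + Complex.I • πaux (ψ + Γ ψ))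
    (hGm : Gm = φaux (ψ + Γ ψ) + Complex.I • πaux (ψ - Γ ψ))
    (Cp Cm : ℝ)
    (hCp : Cp = Real.sqrt
      (‖(Submodule.orthogonalProjectionOnto Lφ ψ : K) - Γ (Submodule.orthogonalProjectionOnto Lφ ψ : K)‖ ^ 2 +
       ‖(Submodule.orthogonalProjectionOnto Lπ ψ : K) + Γ (Submodule.orthogonalProjectionOnto Lπ ψ : K)‖ ^ 2))
    (hCm : Cm = Real.sqrt
      (‖(Submodule.orthogonalProjectionOnto Lφ ψ : K) + Γ (Submodule.orthogonalProjectionOnto Lφ ψ : K)‖ ^ 2 +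
       ‖(Submodule.orthogonalProjectionOnto Lπ ψ : K) - Γ (Submodule.orthogonalProjectionOnto Lπ ψ : K)‖ ^ 2)) :
    (∀ A ∈ Submodule.span ℂ
        {M : H →L[ℂ] H | ∃ l : List K, (∀ ξ ∈ l, ξ ∈ L) ∧ Even l.length ∧
          M = (l.map fld).prod},
      ‖(2⁻¹ : ℂ) • (Gp * A - A * Gp)‖ ≤ Cp * ‖A‖ ∧
      ‖(2⁻¹ : ℂ) • (Gm * A - A * Gm)‖ ≤ Cm * ‖A‖) ∧
    (∀ A ∈ Submodule.span ℂ
        {M : H →L[ℂ] H | ∃ l : List K, (∀ ξ ∈ l, ξ ∈ L) ∧ ¬ Even l.length ∧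
          M = (l.map fld).prod},
      ‖(2⁻¹ : ℂ) • (Gp * A + A * Gp)‖ ≤ Cp * ‖A‖ ∧
      ‖(2⁻¹ : ℂ) • (Gm * A + A * Gm)‖ ≤ Cm * ‖A‖) := by
  obtain ⟨c, rfl⟩ := exists_linearMap_coe_eq_of_map_smul_add hastar_lin
  obtain ⟨Γ, rfl⟩ : ∃ Γ' : K →ₗ⋆[ℂ] K, ⇑Γ' = Γ := ⟨⟨⟨Γ, hΓadd⟩, hΓsmul⟩, rfl⟩
  have ha : ∀ ψ, a ψ = adjoint (c ψ) := fun ψ => by rw [hstar, ContinuousLinearMap.adjoint_adjoint]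
  simp only [ha] at hCAR1 hCAR2 hφaux hπaux hfld
  have hc : IsCAR c := ⟨hCAR1, hCAR2⟩
  have hΓ : IsConjugation Γ := ⟨hΓinv, hΓinner⟩
  obtain rfl : fld = segalField c := funext hfld
  obtain rfl : φaux = auxField c Γ := funext hφaux
  obtain rfl : πaux = auxMomentum c Γ := funext hπaux
  subst hL hGp hGm hCp hCm
  rw [auxField_sub_add_I_smul_auxMomentum hΓ.involutive,
    auxField_add_I_smul_auxMomentum hΓ.involutive]
  set q := (Submodule.orthogonalProjectionOnto Lφ ψ : K)
  set p := (Submodule.orthogonalProjectionOnto Lπ ψ : K)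
  have hψq : ψ - q ∈ Lφᗮ := Submodule.sub_starProjection_mem_orthogonal ψ
  have hψp : ψ - p ∈ Lπᗮ := Submodule.sub_starProjection_mem_orthogonal ψ
  have hIψq : Complex.I • ψ - Complex.I • q ∈ Lφᗮ := smul_sub Complex.I ψ q ▸ Lφᗮ.smul_mem _ hψq
  have hIψp : Complex.I • ψ - Complex.I • p ∈ Lπᗮ := smul_sub Complex.I ψ p ▸ Lπᗮ.smul_mem _ hψp
  obtain ⟨hGm_even, hGm_odd⟩ :=
    hc.norm_half_smul_gradedCommutator_le hΓ hLφΓ hLπΓ hψq hψp norm_one.le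
  obtain ⟨hGp_even, hGp_odd⟩ := hc.norm_half_smul_gradedCommutator_le hΓ hLφΓ hLπΓ hIψq hIψp
    (by rw [norm_neg, Complex.norm_I] : ‖-Complex.I‖ ≤ 1)
  rw [one_smul] at hGm_even hGm_odd
  rw [norm_I_smul_add_map, norm_I_smul_sub_map] at hGp_even hGp_odd
  exact ⟨fun A hA => ⟨hGp_even A hA, hGm_even A hA⟩, fun A hA => ⟨hGp_odd A hA, hGm_odd A hA⟩⟩

/-- Norm bounds for the odd derivations `δ^±_ψ` on the polynomial field algebra
`P(L)`: on even elements `A⁺` (span of even field monomials with entries in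
`L`), `δ^±_ψ(A⁺) = ½[G_±, A⁺]₋`, and on odd elements `A⁻`,
`δ^±_ψ(A⁻) = ½[G_±, A⁻]₊`, where
`G_± = φ_aux((1∓Γ)ψ) + iπ_aux((1±Γ)ψ)`.  These satisfy
`‖δ⁺_ψ(A^±)‖ ≤ (‖(1-Γ)E_φψ‖² + ‖(1+Γ)E_πψ‖²)^{1/2}·‖A^±‖` and
`‖δ⁻_ψ(A^±)‖ ≤ (‖(1+Γ)E_φψ‖² + ‖(1-Γ)E_πψ‖²)^{1/2}·‖A^±‖`. -/
theorem derivations_norm_bounds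
    {K H : Type*} [NormedAddCommGroup K] [InnerProductSpace ℂ K] [CompleteSpace K]
    [NormedAddCommGroup H] [InnerProductSpace ℂ H] [CompleteSpace H]
    (a astar : K → H →L[ℂ] H)
    (hstar : ∀ ψ, astar ψ = ContinuousLinearMap.adjoint (a ψ))
    (hastar_lin : ∀ (c : ℂ) ψ₁ ψ₂, astar (c • ψ₁ + ψ₂) = c • astar ψ₁ + astar ψ₂)
    (hCAR1 : ∀ ψ₁ ψ₂, a ψ₁ * a ψ₂ + a ψ₂ * a ψ₁ = 0)
    (hCAR2 : ∀ ψ₁ ψ₂, a ψ₁ * astar ψ₂ + astar ψ₂ * a ψ₁ = ⟪ψ₁, ψ₂⟫_ℂ • 1)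
    (Γ : K → K)
    (hΓinv : ∀ ψ, Γ (Γ ψ) = ψ)
    (hΓadd : ∀ ψ₁ ψ₂, Γ (ψ₁ + ψ₂) = Γ ψ₁ + Γ ψ₂)
    (hΓsmul : ∀ (c : ℂ) ψ, Γ (c • ψ) = (starRingEnd ℂ c) • Γ ψ)
    (hΓinner : ∀ ψ₁ ψ₂, ⟪Γ ψ₁, Γ ψ₂⟫_ℂ = ⟪ψ₂, ψ₁⟫_ℂ)
    (φaux πaux fld : K → H →L[ℂ] H)
    (hφaux : ∀ η, φaux η = astar η + a (Γ η))
    (hπaux : ∀ η, πaux η = Complex.I • (astar η - a (Γ η)))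
    (hfld : ∀ ξ, fld ξ = astar ξ + a ξ)
    (Lφ Lπ : Submodule ℂ K) [Submodule.HasOrthogonalProjection Lφ] [Submodule.HasOrthogonalProjection Lπ]
    (hLφΓ : ∀ x ∈ Lφ, Γ x ∈ Lφ) (hLπΓ : ∀ x ∈ Lπ, Γ x ∈ Lπ)
    (L : Set K)
    (hL : L = {x | ∃ f ∈ Lφ, ∃ g ∈ Lπ, x = (f + Γ f) + (g - Γ g)})
    (ψ : K) (Gp Gm : H →L[ℂ] H)
    (hGp : Gp = φaux (ψ - Γ ψ) + Complex.I • πaux (ψ + Γ ψ))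
    (hGm : Gm = φaux (ψ + Γ ψ) + Complex.I • πaux (ψ - Γ ψ))
    (Cp Cm : ℝ)
    (hCp : Cp = Real.sqrt
      (‖(Submodule.orthogonalProjectionOnto Lφ ψ : K) - Γ (Submodule.orthogonalProjectionOnto Lφ ψ : K)‖ ^ 2 +
       ‖(Submodule.orthogonalProjectionOnto Lπ ψ : K) + Γ (Submodule.orthogonalProjectionOnto Lπ ψ : K)‖ ^ 2))
    (hCm : Cm = Real.sqrt
      (‖(Submodule.orthogonalProjectionOnto Lφ ψ : K) + Γ (Submodule.orthogonalProjectionOnto Lφ ψ : K)‖ ^ 2 +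
       ‖(Submodule.orthogonalProjectionOnto Lπ ψ : K) - Γ (Submodule.orthogonalProjectionOnto Lπ ψ : K)‖ ^ 2)) :
    (∀ A ∈ Submodule.span ℂ
        {M : H →L[ℂ] H | ∃ l : List K, (∀ ξ ∈ l, ξ ∈ L) ∧ Even l.length ∧
          M = (l.map fld).prod},
      ‖(2⁻¹ : ℂ) • (Gp * A - A * Gp)‖ ≤ Cp * ‖A‖ ∧
      ‖(2⁻¹ : ℂ) • (Gm * A - A * Gm)‖ ≤ Cm * ‖A‖) ∧
    (∀ A ∈ Submodule.span ℂ
        {M : H →L[ℂ] H | ∃ l : List K, (∀ ξ ∈ l, ξ ∈ L) ∧ ¬ Even l.length ∧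
          M = (l.map fld).prod},
      ‖(2⁻¹ : ℂ) • (Gp * A + A * Gp)‖ ≤ Cp * ‖A‖ ∧
      ‖(2⁻¹ : ℂ) • (Gm * A + A * Gm)‖ ≤ Cm * ‖A‖) :=
  derivations_norm_bounds_general a astar hstar hastar_lin hCAR1 hCAR2 Γ hΓinv hΓadd hΓsmul hΓinner
    φaux πaux fld hφaux hπaux hfld Lφ Lπ hLφΓ hLπΓ L hL ψ Gp Gm hGp hGm Cp Cm hCp hCm
end
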